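/- arXiv:1605.05996 — 4 statements merged into one kernel-verified Lean document; each statement's English description precedes it below -/
import Mathlib

section
/- Let X be a compact metric space, T : X → X continuous, and μ a T-invariant Borel probability measure. If for every continuous φ : X → ℝ and every ε > 0, liminf_{n→∞} μ({x : |(1/n)∑_{i=0}^{n-1} φ(T^i x) − ∫φ dμ| > ε}) = 0, then μ is ergodic. -/
open Filter MeasureTheory Topology
open scoped ENNReal NNReal

private lemma cint {X : Type*} [MetricSpace X] [CompactSpace X] [MeasurableSpace X] [BorelSpace X]
    (m : Measure X) [IsFiniteMeasure m] {φ : X → ℝ} (hφ : Continuous φ) : Integrable φ m := by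
  have := hφ.continuousOn.integrableOn_compact (isCompact_univ) (μ := m)
  rwa [integrableOn_univ] at this

/-- LDT-III' for an invariant measure implies ergodicity. -/
theorem stmt7 {X : Type*} [MetricSpace X] [CompactSpace X] [MeasurableSpace X] [BorelSpace X]
    (T : X → X) (hT : Continuous T) (μ : Measure X) [IsProbabilityMeasure μ]
    (hinv : ∀ s : Set X, MeasurableSet s → μ (T ⁻¹' s) = μ s)
    (h : ∀ φ : X → ℝ, Continuous φ → ∀ ε : ℝ, 0 < ε →
      Filter.liminf (fun n : ℕ =>
        μ {x : X | |(∑ i ∈ Finset.range n, φ (T^[i] x)) / n - ∫ x, φ x ∂μ| > ε})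
        Filter.atTop = 0) :
    ∀ s : Set X, MeasurableSet s → T ⁻¹' s = s → μ s = 0 ∨ μ s = 1 := by
  intro s hs hsinv
  -- T preserves μ
  have hTm : Measurable T := hT.measurable
  have hmap : Measure.map T μ = μ := by
    refine Measure.ext fun t ht => ?_
    rw [Measure.map_apply hTm ht, hinv t ht]
  have hTpre : MeasurePreserving T μ μ := ⟨hTm, hmap⟩
  -- iterates fix s
  have hfix : ∀ n : ℕ, T^[n] ⁻¹' s = s := by
    intro n; induction n with
    | zero => simp
    | succ n ih =>
      rw [Function.iterate_succ', Set.preimage_comp, hsinv, ih]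
  set ν := μ.restrict s with hν
  have hνuniv : ν Set.univ = μ s := by simp [hν, Measure.restrict_apply, hs]
  -- T^[n] preserves ν
  have hνpre : ∀ n : ℕ, MeasurePreserving (T^[n]) ν ν := by
    intro n
    refine ⟨(hT.iterate n).measurable, ?_⟩
    have := Measure.restrict_map ((hTpre.iterate n).measurable) hs (μ := μ)
    rw [(hTpre.iterate n).map_eq, hfix n] at this
    exact this.symm
  -- key identity
  have key : ∀ φ : X → ℝ, Continuous φ →
      ∫ x in s, φ x ∂μ = (μ s).toReal * ∫ x, φ x ∂μ := by
    intro φ hφ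
    set c := ∫ x, φ x ∂μ with hc
    -- comp integrals
    have hcomp : ∀ n : ℕ, ∫ x, φ (T^[n] x) ∂ν = ∫ x, φ x ∂ν := by
      intro n
      rw [← (hνpre n).map_eq, integral_map ((hνpre n).measurable.aemeasurable)
        (hφ.aestronglyMeasurable), (hνpre n).map_eq]
    have havg : ∀ n : ℕ, 1 ≤ n →
        ∫ x, (∑ i ∈ Finset.range n, φ (T^[i] x)) / n ∂ν = ∫ x, φ x ∂ν := by
      intro n hn
      have hint : ∀ i ∈ Finset.range n, Integrable (fun x => φ (T^[i] x)) ν :=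
        fun i _ => cint ν (hφ.comp (hT.iterate i))
      simp_rw [div_eq_mul_inv]
      rw [integral_mul_const, integral_finset_sum _ hint]
      simp_rw [hcomp]
      rw [Finset.sum_const, Finset.card_range, nsmul_eq_mul]
      field_simp
    -- bound
    set φb : C(X, ℝ) := ⟨φ, hφ⟩ with hφb
    set C : ℝ := ‖φb‖ + |c| with hC
    have hC0 : 0 ≤ C := by positivity
    have hCb : ∀ x, |φ x| ≤ C := fun x => le_trans (φb.norm_coe_le_norm x) (le_add_of_nonneg_right (abs_nonneg c))
    have habs : ∀ ε : ℝ, 0 < ε → |∫ x, φ x ∂ν - (μ s).toReal * c| ≤ ε * (1 + 2 * C) := by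
      intro ε hε
      have hliminf := h φ hφ ε hε
      have hfreq : ∃ᶠ n in atTop,
          μ {x : X | |(∑ i ∈ Finset.range n, φ (T^[i] x)) / n - c| > ε} < ENNReal.ofReal ε := by
        refine frequently_lt_of_liminf_lt (by isBoundedDefault) ?_
        rw [hliminf]
        exact ENNReal.ofReal_pos.mpr hε
      obtain ⟨n, hnD, hn1⟩ := (hfreq.and_eventually (eventually_ge_atTop 1)).exists
      set A : X → ℝ := fun x => (∑ i ∈ Finset.range n, φ (T^[i] x)) / n with hA
      set D : Set X := {x : X | |A x - c| > ε} with hD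
      have hAc : Continuous A := by
        apply Continuous.div_const
        exact continuous_finset_sum _ (fun i _ => hφ.comp (hT.iterate i))
      have hDm : MeasurableSet D :=
        measurableSet_lt measurable_const ((hAc.sub continuous_const).abs.measurable)
      have hAb : ∀ x, |A x - c| ≤ 2 * C := by
        intro x
        have h1 : |A x| ≤ C := by
          rw [hA]
          rw [abs_div, abs_of_nonneg (Nat.cast_nonneg n : (0:ℝ) ≤ n)]
          rw [div_le_iff₀ (by exact_mod_cast hn1 : (0:ℝ) < n)]
          calc |∑ i ∈ Finset.range n, φ (T^[i] x)|
              ≤ ∑ i ∈ Finset.range n, |φ (T^[i] x)| := Finset.abs_sum_le_sum_abs _ _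
            _ ≤ ∑ _i ∈ Finset.range n, C := Finset.sum_le_sum (fun i _ => hCb _)
            _ = C * n := by rw [Finset.sum_const, Finset.card_range, nsmul_eq_mul]; ring
        have h2 : |c| ≤ C := le_add_of_nonneg_left (norm_nonneg φb)
        calc |A x - c| ≤ |A x| + |c| := abs_sub _ _
          _ ≤ C + C := add_le_add h1 h2
          _ = 2 * C := by ring
      -- pointwise bound
      have hpt : ∀ x, |A x - c| ≤ ε + D.indicator (fun _ => 2 * C) x := by
        intro x
        by_cases hx : x ∈ D
        · rw [Set.indicator_of_mem hx]
          exact le_add_of_nonneg_of_le hε.le (hAb x)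
        · rw [Set.indicator_of_notMem hx]
          rw [hD] at hx
          simp only [Set.mem_setOf_eq, not_lt] at hx
          linarith
      have hintA : Integrable (fun x => A x - c) ν := (cint ν hAc).sub (integrable_const c)
      have hintbd : Integrable (fun x => ε + D.indicator (fun _ => 2 * C) x) ν :=
        (integrable_const ε).add ((integrable_const (2*C)).indicator hDm)
      have hmono : ∫ x, |A x - c| ∂ν ≤ ∫ x, ε + D.indicator (fun _ => 2 * C) x ∂ν :=
        integral_mono hintA.abs hintbd hpt
      have hDsmall : (ν D).toReal ≤ ε := by
        have h1 : ν D ≤ μ D := Measure.restrict_le_self D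
        have h2 : ν D < ENNReal.ofReal ε := lt_of_le_of_lt h1 hnD
        have := ENNReal.toReal_mono (by simp) h2.le
        simpa [ENNReal.toReal_ofReal hε.le] using this
      have hcalc : ∫ x, ε + D.indicator (fun _ => 2 * C) x ∂ν ≤ ε * (1 + 2 * C) := by
        rw [integral_add (integrable_const ε) ((integrable_const (2*C)).indicator hDm)]
        rw [integral_const, integral_indicator_const _ hDm]
        have hν1 : (ν Set.univ).toReal ≤ 1 := by
          rw [hνuniv]
          exact ENNReal.toReal_le_of_le_ofReal one_pos.le (by simpa using prob_le_one)
        have : (ν Set.univ).toReal • ε + (ν D).toReal • (2 * C) ≤ 1 * ε + ε * (2 * C) := by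
          apply add_le_add
          · simpa [smul_eq_mul] using mul_le_mul_of_nonneg_right hν1 hε.le
          · simp only [smul_eq_mul]
            exact mul_le_mul_of_nonneg_right hDsmall (by positivity)
        simp only [measureReal_def]
        linarith
      have hfin : |∫ x, (A x - c) ∂ν| ≤ ε * (1 + 2 * C) := by
        calc |∫ x, (A x - c) ∂ν| ≤ ∫ x, |A x - c| ∂ν := by
              simpa using norm_integral_le_integral_norm (μ := ν) (fun x => A x - c)
          _ ≤ _ := le_trans hmono hcalc
      rw [integral_sub (cint ν hAc) (integrable_const c), integral_const, measureReal_def, hνuniv] at hfin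
      rw [havg n hn1] at hfin
      simpa [smul_eq_mul] using hfin
    -- conclude equality
    have : |∫ x, φ x ∂ν - (μ s).toReal * c| = 0 := by
      by_contra hne
      have hpos : 0 < |∫ x, φ x ∂ν - (μ s).toReal * c| :=
        lt_of_le_of_ne (abs_nonneg _) (Ne.symm hne)
      set M := |∫ x, φ x ∂ν - (μ s).toReal * c| with hM
      have hCpos : (0:ℝ) < 1 + 2 * C := by linarith
      have := habs (M / (2 * (1 + 2 * C))) (by positivity)
      rw [div_mul_eq_mul_div, mul_comm] at this
      have h2 : (1 + 2 * C) * M / (2 * (1 + 2 * C)) = M / 2 := by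
        field_simp
      rw [h2] at this
      linarith
    have := abs_eq_zero.mp this
    linarith [sub_eq_zero.mp this]
  -- measure ext
  have hext : μ.restrict s = μ s • μ := by
    apply ext_of_forall_lintegral_eq_of_IsFiniteMeasure
    intro f
    have hg : Continuous (fun x => ((f x : ℝ≥0) : ℝ)) := NNReal.continuous_coe.comp f.continuous
    have lem : ∀ (m : Measure X), IsFiniteMeasure m →
        ∫⁻ x, (f x : ℝ≥0∞) ∂m = ENNReal.ofReal (∫ x, ((f x : ℝ≥0) : ℝ) ∂m) := by
      intro m hm
      rw [ofReal_integral_eq_lintegral_ofReal (cint m hg)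
        (Filter.Eventually.of_forall fun x => (f x).coe_nonneg)]
      simp [ENNReal.ofReal_coe_nnreal]
    rw [lintegral_smul_measure, lem _ inferInstance, lem _ inferInstance,
      key _ hg, ENNReal.ofReal_mul ENNReal.toReal_nonneg,
      ENNReal.ofReal_toReal (measure_ne_top μ s), smul_eq_mul]
  have := congrArg (fun m : Measure X => m s) hext
  simp only [Measure.restrict_apply hs, Set.inter_self, Measure.smul_apply, smul_eq_mul] at this
  have hne : μ s ≠ ⊤ := measure_ne_top μ s
  set a := (μ s).toReal with ha
  have hr : a = a * a := by
    rw [ha]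
    nth_rewrite 1 [this]
    exact ENNReal.toReal_mul
  rcases mul_eq_zero.mp (show a * (a - 1) = 0 by nlinarith) with h0 | h1
  · left
    rcases (ENNReal.toReal_eq_zero_iff _).mp h0 with h | h
    · exact h
    · exact absurd h hne
  · right
    exact (ENNReal.toReal_eq_one_iff _).mp (by linarith)
end

section
/- Let X be a compact metric space, T : X → X continuous, and μ a Borel probability measure with full support (supp μ = X). Suppose that for every continuous φ : X → ℝ and every ε > 0, liminf_{n→∞} μ({x : |(1/n)∑_{i=0}^{n-1} φ(T^i x) − ∫φ dμ| > ε}) = 0. Then for every pair of nonempty open subsets U, V ⊆ X there exists n ∈ ℕ with T^n(U) ∩ V ≠ ∅, i.e., T is topologically transitive. -/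
open Filter MeasureTheory Topology

/-- LDT-III for a fully supported measure implies topological transitivity. -/
theorem stmt9 {X : Type*} [MetricSpace X] [CompactSpace X] [MeasurableSpace X] [BorelSpace X]
    (T : X → X) (hT : Continuous T) (μ : Measure X) [IsProbabilityMeasure μ]
    (hsupp : ∀ U : Set X, IsOpen U → U.Nonempty → 0 < μ U)
    (h : ∀ φ : X → ℝ, Continuous φ → ∀ ε : ℝ, 0 < ε →
      Filter.liminf (fun n : ℕ =>
        μ {x : X | |(∑ i ∈ Finset.range n, φ (T^[i] x)) / n - ∫ x, φ x ∂μ| > ε})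
        Filter.atTop = 0) :
    ∀ U V : Set X, IsOpen U → IsOpen V → U.Nonempty → V.Nonempty →
      ∃ n : ℕ, (T^[n] '' U ∩ V).Nonempty := by
  intro U V hU hV hUne hVne
  by_contra hcon
  push_neg at hcon
  -- For every x ∈ U and i, T^[i] x ∉ V
  have hmiss : ∀ x ∈ U, ∀ i : ℕ, T^[i] x ∉ V := by
    intro x hx i hxi
    exact Set.eq_empty_iff_forall_notMem.mp (hcon i) (T^[i] x) ⟨⟨x, hx, rfl⟩, hxi⟩
  obtain ⟨x₀, hx₀⟩ := hVne
  obtain ⟨r, hr, hball⟩ := Metric.isOpen_iff.mp hV x₀ hx₀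
  set φ : X → ℝ := fun x => max 0 (1 - dist x x₀ / r) with hφdef
  have hφc : Continuous φ := by
    apply continuous_const.max
    fun_prop
  have hφnn : ∀ x, 0 ≤ φ x := fun x => le_max_left _ _
  have hφint : Integrable φ μ := hφc.integrable_of_hasCompactSupport
    (HasCompactSupport.of_compactSpace _)
  have hsub : Metric.ball x₀ r ⊆ Function.support φ := by
    intro x hx
    have hd : dist x x₀ / r < 1 := (div_lt_one hr).mpr hx
    have : 0 < φ x := by
      simp only [hφdef, lt_max_iff]
      right; linarith
    exact this.ne'
  have hintpos : 0 < ∫ x, φ x ∂μ := by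
    rw [integral_pos_iff_support_of_nonneg hφnn hφint]
    exact lt_of_lt_of_le (hsupp _ Metric.isOpen_ball ⟨x₀, Metric.mem_ball_self hr⟩)
      (measure_mono hsub)
  set c := ∫ x, φ x ∂μ with hc
  have hzero : ∀ x ∈ U, ∀ i : ℕ, φ (T^[i] x) = 0 := by
    intro x hx i
    have hnot : T^[i] x ∉ Metric.ball x₀ r := fun hb => hmiss x hx i (hball hb)
    have hd : r ≤ dist (T^[i] x) x₀ := not_lt.mp (by simpa [Metric.mem_ball] using hnot)
    have : 1 - dist (T^[i] x) x₀ / r ≤ 0 := by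
      have : (1:ℝ) ≤ dist (T^[i] x) x₀ / r := (one_le_div hr).mpr hd
      linarith
    simpa [hφdef] using max_eq_left this
  -- the set in the liminf contains U for every n
  have hsetU : ∀ n : ℕ, U ⊆ {x : X | |(∑ i ∈ Finset.range n, φ (T^[i] x)) / n - c| > c/2} := by
    intro n x hx
    have hsum : (∑ i ∈ Finset.range n, φ (T^[i] x)) = 0 :=
      Finset.sum_eq_zero fun i _ => hzero x hx i
    simp only [Set.mem_setOf_eq, hsum, zero_div, zero_sub, abs_neg, abs_of_pos hintpos]
    linarith
  have hlim := h φ hφc (c/2) (by linarith)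
  have hle : μ U ≤ Filter.liminf (fun n : ℕ =>
      μ {x : X | |(∑ i ∈ Finset.range n, φ (T^[i] x)) / n - c| > c/2}) Filter.atTop := by
    exact Filter.le_liminf_of_le (by isBoundedDefault)
      (Filter.Eventually.of_forall fun n => measure_mono (hsetU n))
  rw [hlim] at hle
  exact absurd hle (not_le.mpr (hsupp U hU hUne))
end

section
/- Let X be a compact metric space, T : X → X continuous, and μ a Borel probability measure satisfying: for every continuous φ : X → ℝ and every ε > 0, liminf_{n→∞} μ({x : |(1/n)∑_{i=0}^{n-1} φ(T^i x) − ∫φ dμ| > ε}) = 0. Then for every nonempty open U ⊆ X with μ(U) > 0 there exists x ∈ U whose set of return times N(x, U) = {n : T^n x ∈ U} has positive upper density. -/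
open Filter MeasureTheory Topology

/-- LDT-III' implies that every open set of positive measure contains a point whose
return-time set has positive upper density. -/
theorem stmt10 {X : Type*} [MetricSpace X] [CompactSpace X] [MeasurableSpace X] [BorelSpace X]
    (T : X → X) (hT : Continuous T) (μ : Measure X) [IsProbabilityMeasure μ]
    (h : ∀ φ : X → ℝ, Continuous φ → ∀ ε : ℝ, 0 < ε →
      Filter.liminf (fun n : ℕ =>
        μ {x : X | |(∑ i ∈ Finset.range n, φ (T^[i] x)) / n - ∫ x, φ x ∂μ| > ε})
        Filter.atTop = 0) :
    ∀ U : Set X, IsOpen U → U.Nonempty → 0 < μ U →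
      ∃ x ∈ U, 0 < Filter.limsup (fun n : ℕ =>
        (({k : ℕ | T^[k] x ∈ U} ∩ Set.Ico 0 n).ncard : ℝ) / n) Filter.atTop := by
  classical
  intro U hU hne hpos
  -- d x n is the quantity whose limsup we study
  set d : X → ℕ → ℝ := fun x n => (({k : ℕ | T^[k] x ∈ U} ∩ Set.Ico 0 n).ncard : ℝ) / n with hd
  have hcard : ∀ (x : X) (n : ℕ),
      ({k : ℕ | T^[k] x ∈ U} ∩ Set.Ico 0 n).ncard
        = ((Finset.range n).filter (fun i => T^[i] x ∈ U)).card := by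
    intro x n
    rw [← Set.ncard_coe_finset]
    congr 1
    ext k
    simp only [Set.mem_inter_iff, Set.mem_setOf_eq, Set.mem_Ico, Finset.coe_filter,
      Finset.mem_range, zero_le, true_and]
    tauto
  have hdle1 : ∀ (x : X) (n : ℕ), d x n ≤ 1 := by
    intro x n
    rcases Nat.eq_zero_or_pos n with rfl | hn
    · simp [hd]
    · rw [hd]
      simp only
      rw [div_le_one (by exact_mod_cast hn)]
      rw [hcard]
      exact_mod_cast (Finset.card_filter_le _ _).trans_eq (Finset.card_range n)
  have hbdd : ∀ x : X, IsBoundedUnder (· ≤ ·) atTop (fun n => d x n) :=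
    fun x => isBoundedUnder_of ⟨1, fun n => hdle1 x n⟩
  by_cases hUc : Uᶜ = ∅
  · -- U = univ : trivial case
    have hUuniv : U = Set.univ := by
      rw [← Set.compl_empty_iff]; exact hUc
    obtain ⟨x, hx⟩ := hne
    refine ⟨x, hx, ?_⟩
    have hfreq : ∃ᶠ n in atTop, (1 : ℝ) ≤ d x n := by
      refine Eventually.frequently ?_
      filter_upwards [eventually_ge_atTop 1] with n hn
      have h1 : {k : ℕ | T^[k] x ∈ U} ∩ Set.Ico 0 n = Set.Ico 0 n := by
        simp [hUuniv]
      rw [hd]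
      simp only [h1]
      have h2 : (Set.Ico 0 n).ncard = n := by
        rw [← Nat.card_coe_set_eq, Nat.card_eq_card_toFinset]
        simp
      rw [h2, div_self (by exact_mod_cast hn.trans_lt' Nat.zero_lt_one |>.ne')]
    calc (0:ℝ) < 1 := one_pos
      _ ≤ _ := le_limsup_of_frequently_le hfreq (hbdd x)
  · -- main case: Uᶜ nonempty
    have hUcne : (Uᶜ : Set X).Nonempty := Set.nonempty_iff_ne_empty.2 hUc
    set φ : X → ℝ := fun x => min (Metric.infDist x Uᶜ) 1 with hφ
    have hφcont : Continuous φ := (Metric.continuous_infDist_pt Uᶜ).min continuous_const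
    have hφ0 : ∀ y, 0 ≤ φ y := fun y => le_min Metric.infDist_nonneg zero_le_one
    have hφ1 : ∀ y, φ y ≤ 1 := fun y => min_le_right _ _
    have hφzero : ∀ y, y ∉ U → φ y = 0 := by
      intro y hy
      have : Metric.infDist y Uᶜ = 0 := Metric.infDist_zero_of_mem hy
      simp [hφ, this]
    have hsupp : Function.support φ = U := by
      ext y
      simp only [Function.mem_support]
      constructor
      · intro hy
        by_contra hyU
        exact hy (hφzero y hyU)
      · intro hy
        have h1 : 0 < Metric.infDist y Uᶜ :=
          (hU.isClosed_compl.notMem_iff_infDist_pos hUcne).1 (by simpa using hy)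
        exact (lt_min h1 one_pos).ne'
    have hφint : Integrable φ μ :=
      hφcont.integrable_of_hasCompactSupport ((isClosed_tsupport φ).isCompact)
    set c : ℝ := ∫ x, φ x ∂μ with hc
    have hcpos : 0 < c := by
      rw [hc, integral_pos_iff_support_of_nonneg hφ0 hφint, hsupp]
      exact hpos
    -- bad sets
    set bad : ℕ → Set X := fun n =>
      {x : X | |(∑ i ∈ Finset.range n, φ (T^[i] x)) / n - c| > c / 2} with hbad
    have hliminf : liminf (fun n => μ (bad n)) atTop = 0 := h φ hφcont (c/2) (by positivity)
    have hbadmeas : ∀ n, MeasurableSet (bad n) := by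
      intro n
      have hcont : Continuous (fun x => |(∑ i ∈ Finset.range n, φ (T^[i] x)) / (n:ℝ) - c|) := by
        apply Continuous.abs
        apply Continuous.sub _ continuous_const
        exact (continuous_finset_sum _ (fun i _ => hφcont.comp (hT.iterate i))).div_const _
      exact (isOpen_lt continuous_const hcont).measurableSet
    -- choose good times
    have hsel : ∀ k : ℕ, ∃ n : ℕ, k + 1 ≤ n ∧ μ (bad n) < μ U * 2⁻¹ ^ (k + 2) := by
      intro k
      have hεpos : 0 < μ U * 2⁻¹ ^ (k + 2) := by
        refine ENNReal.mul_pos hpos.ne' ?_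
        exact pow_ne_zero _ (ENNReal.inv_ne_zero.2 ENNReal.ofNat_ne_top)
      have hlt : liminf (fun n => μ (bad n)) atTop < μ U * 2⁻¹ ^ (k + 2) := by
        rw [hliminf]; exact hεpos
      have hfr := frequently_lt_of_liminf_lt (by isBoundedDefault) hlt
      obtain ⟨n, hn1, hn2⟩ := frequently_atTop.1 hfr (k + 1)
      exact ⟨n, hn1, hn2⟩
    choose nk hnk1 hnk2 using hsel
    set B : Set X := ⋃ k, bad (nk k) with hB
    have hsum : ∑' (k : ℕ), μ U * (2:ENNReal)⁻¹ ^ (k + 2) = μ U * 2⁻¹ := by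
      have e1 : ∀ k : ℕ, μ U * (2:ENNReal)⁻¹ ^ (k + 2) = (μ U * 4⁻¹) * 2⁻¹ ^ k := by
        intro k
        rw [pow_add, show ((2:ENNReal)⁻¹) ^ 2 = 4⁻¹ by
          rw [show (4:ENNReal) = 2 * 2 by norm_num,
            ENNReal.mul_inv (Or.inl two_ne_zero) (Or.inl ENNReal.ofNat_ne_top), sq]]
        ring
      simp_rw [e1]
      rw [ENNReal.tsum_mul_left, ENNReal.tsum_geometric, ENNReal.one_sub_inv_two, inv_inv,
        mul_assoc]
      congr 1
      rw [show (4:ENNReal) = 2 * 2 by norm_num,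
        ENNReal.mul_inv (Or.inl two_ne_zero) (Or.inl ENNReal.ofNat_ne_top), mul_assoc,
        ENNReal.inv_mul_cancel two_ne_zero ENNReal.ofNat_ne_top, mul_one]
    have hμB : μ B < μ U := by
      have h1 : μ B ≤ ∑' (k : ℕ), μ (bad (nk k)) := measure_iUnion_le _
      have h2 : ∑' (k : ℕ), μ (bad (nk k)) ≤ ∑' (k : ℕ), μ U * (2:ENNReal)⁻¹ ^ (k + 2) :=
        ENNReal.tsum_le_tsum (fun k => (hnk2 k).le)
      have h3 : μ U * 2⁻¹ < μ U := by
        rw [← div_eq_mul_inv]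
        exact ENNReal.half_lt_self hpos.ne' (measure_ne_top μ U)
      exact (h1.trans (h2.trans_eq hsum)).trans_lt h3
    have hBmeas : MeasurableSet B := MeasurableSet.iUnion (fun k => hbadmeas (nk k))
    have hdiff : μ (U \ B) ≠ 0 := by
      intro h0
      have hle : μ U ≤ μ B := by
        calc μ U = μ (U \ B) + μ (U ∩ B) := (measure_diff_add_inter U hBmeas).symm
          _ = μ (U ∩ B) := by rw [h0, zero_add]
          _ ≤ μ B := measure_mono Set.inter_subset_right
      exact absurd hle (not_le.mpr hμB)
    obtain ⟨x, hxU, hxB⟩ := nonempty_of_measure_ne_zero hdiff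
    refine ⟨x, hxU, ?_⟩
    -- x is good for every k
    have hgood : ∀ k : ℕ, c / 2 ≤ d x (nk k) := by
      intro k
      have hx' : x ∉ bad (nk k) := fun hmem => hxB (Set.mem_iUnion.2 ⟨k, hmem⟩)
      have habs : |(∑ i ∈ Finset.range (nk k), φ (T^[i] x)) / (nk k : ℝ) - c| ≤ c / 2 :=
        not_lt.1 hx'
      have hAv : c / 2 ≤ (∑ i ∈ Finset.range (nk k), φ (T^[i] x)) / (nk k : ℝ) := by
        have := (abs_le.1 habs).1
        linarith
      have hnpos : (0:ℝ) < (nk k : ℝ) := by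
        exact_mod_cast Nat.lt_of_lt_of_le (Nat.succ_pos k) (hnk1 k)
      have hSle : (∑ i ∈ Finset.range (nk k), φ (T^[i] x))
          ≤ (((Finset.range (nk k)).filter (fun i => T^[i] x ∈ U)).card : ℝ) := by
        rw [Finset.card_filter]
        push_cast
        refine Finset.sum_le_sum (fun i _ => ?_)
        by_cases hi : T^[i] x ∈ U
        · simp only [hi, if_true]
          exact hφ1 _
        · simp only [hi, if_false]
          exact le_of_eq (hφzero _ hi)
      calc c / 2 ≤ (∑ i ∈ Finset.range (nk k), φ (T^[i] x)) / (nk k : ℝ) := hAv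
        _ ≤ (((Finset.range (nk k)).filter (fun i => T^[i] x ∈ U)).card : ℝ) / (nk k : ℝ) := by
            gcongr
        _ = d x (nk k) := by rw [hd]; simp only; rw [hcard]
    have hfreq : ∃ᶠ n in atTop, c / 2 ≤ d x n := by
      rw [frequently_atTop]
      intro a
      exact ⟨nk a, (Nat.le_succ a).trans (hnk1 a), hgood a⟩
    calc (0:ℝ) < c / 2 := by positivity
      _ ≤ _ := le_limsup_of_frequently_le hfreq (hbdd x)
end

section
/- Let X be a compact metric space, T : X → X continuous, and μ a Borel probability measure satisfying: for every continuous φ : X → ℝ and every ε > 0, liminf_{n→∞} μ({x : |(1/n)∑_{i=0}^{n-1} φ(T^i x) − ∫φ dμ| > ε}) = 0. Then for every pair of nonempty open sets U, V ⊆ X with μ(U) > 0 and μ(V) > 0, there exists n ∈ ℕ with T^n(U) ∩ V ≠ ∅. -/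
open Filter MeasureTheory Topology

/-- LDT-III' implies that any two open sets of positive measure are connected by the
dynamics. -/
theorem stmt19 {X : Type*} [MetricSpace X] [CompactSpace X] [MeasurableSpace X] [BorelSpace X]
    (T : X → X) (hT : Continuous T) (μ : Measure X) [IsProbabilityMeasure μ]
    (h : ∀ φ : X → ℝ, Continuous φ → ∀ ε : ℝ, 0 < ε →
      Filter.liminf (fun n : ℕ =>
        μ {x : X | |(∑ i ∈ Finset.range n, φ (T^[i] x)) / n - ∫ x, φ x ∂μ| > ε})
        Filter.atTop = 0) :
    ∀ U V : Set X, IsOpen U → IsOpen V → U.Nonempty → V.Nonempty →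
      0 < μ U → 0 < μ V → ∃ n : ℕ, (T^[n] '' U ∩ V).Nonempty := by
  intro U V hU hV hUne hVne hUpos hVpos
  by_contra hcon
  push_neg at hcon
  -- every forward image of U is disjoint from V
  have hdisj : ∀ n : ℕ, Disjoint (T^[n] '' U) V := by
    intro n
    exact Set.disjoint_iff_inter_eq_empty.mpr (hcon n)
  -- the closure of the forward orbit of U
  set A : Set X := closure (⋃ n : ℕ, T^[n] '' U) with hA
  have hAclosed : IsClosed A := isClosed_closure
  have hAV : Disjoint A V := by
    have hsub : (⋃ n : ℕ, T^[n] '' U) ⊆ Vᶜ := by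
      rw [Set.iUnion_subset_iff]
      intro n
      exact (hdisj n).subset_compl_right
    have : A ⊆ Vᶜ := closure_minimal hsub (isClosed_compl_iff.mpr hV)
    exact Set.disjoint_left.mpr fun x hxA hxV => this hxA hxV

  -- inner regularity: a closed set F ⊆ V of positive measure
  obtain ⟨F, hFV, hFc, hF⟩ := hV.measurableSet.exists_isClosed_lt_add (μ := μ)
    (measure_ne_top μ V) (ε := μ V / 2) (by simpa using hVpos.ne')
  have hFpos : 0 < μ F := by
    by_contra hc
    push_neg at hc
    have : μ F = 0 := le_antisymm hc (zero_le)
    rw [this, zero_add] at hF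
    exact absurd hF (not_lt.mpr (ENNReal.half_le_self))
  -- Urysohn
  have hFA : Disjoint F A := (hAV.symm.mono_left hFV)
  obtain ⟨f, hf0, hf1, hf01⟩ := exists_continuous_zero_one_of_isClosed hFc hAclosed hFA
  have hfint : Integrable (fun x => f x) μ :=
    f.continuous.integrable_of_hasCompactSupport (HasCompactSupport.of_compactSpace f)
  -- bound the integral
  have hFmeas := hFc.measurableSet
  have hint_le : ∫ x, f x ∂μ ≤ 1 - (μ F).toReal := by
    have hle : ∀ x, f x ≤ Set.indicator Fᶜ (fun _ => (1:ℝ)) x := by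
      intro x
      by_cases hx : x ∈ F
      · simp [Set.indicator_of_notMem (by simpa using hx : x ∉ Fᶜ), hf0 hx]
      · simp [Set.indicator_of_mem (by simpa using hx : x ∈ Fᶜ), (hf01 x).2]
    have hind : Integrable (Set.indicator Fᶜ (fun _ => (1:ℝ))) μ :=
      (integrable_const 1).indicator hFmeas.compl
    calc ∫ x, f x ∂μ ≤ ∫ x, Set.indicator Fᶜ (fun _ => (1:ℝ)) x ∂μ :=
          integral_mono hfint hind hle
      _ = (μ Fᶜ).toReal := by
          rw [integral_indicator_const _ hFmeas.compl]; simp [Measure.real]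
      _ = 1 - (μ F).toReal := by
          rw [measure_compl hFmeas (measure_ne_top μ F), measure_univ,
            ENNReal.toReal_sub_of_le prob_le_one (by simp), ENNReal.toReal_one]
  have hFtoReal : 0 < (μ F).toReal := ENNReal.toReal_pos hFpos.ne' (measure_ne_top μ F)
  have hintlt : ∫ x, f x ∂μ < 1 := lt_of_le_of_lt hint_le (by linarith)
  set ε : ℝ := (1 - ∫ x, f x ∂μ) / 2 with hε
  have hεpos : 0 < ε := by rw [hε]; linarith
  -- on U, the Birkhoff averages are 1 for n ≥ 1
  have hkey : ∀ n : ℕ, 1 ≤ n →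
      U ⊆ {x : X | |(∑ i ∈ Finset.range n, f (T^[i] x)) / n - ∫ x, f x ∂μ| > ε} := by
    intro n hn x hx
    have horb : ∀ i : ℕ, T^[i] x ∈ A := fun i =>
      subset_closure (Set.mem_iUnion.mpr ⟨i, Set.mem_image_of_mem _ hx⟩)
    have hsum : (∑ i ∈ Finset.range n, f (T^[i] x)) = n := by
      rw [Finset.sum_congr rfl (fun i _ => hf1 (horb i))]
      simp
    have hn' : (0:ℝ) < n := by exact_mod_cast hn
    rw [Set.mem_setOf_eq, hsum, div_self hn'.ne']
    rw [abs_of_pos (by linarith)]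
    linarith
  -- contradiction with liminf = 0
  have hlim := h (fun x => f x) f.continuous ε hεpos
  have : μ U ≤ Filter.liminf (fun n : ℕ =>
      μ {x : X | |(∑ i ∈ Finset.range n, f (T^[i] x)) / n - ∫ x, f x ∂μ| > ε})
      Filter.atTop := by
    apply Filter.le_liminf_of_le
    · isBoundedDefault
    · filter_upwards [Filter.eventually_ge_atTop 1] with n hn
      exact measure_mono (hkey n hn)
  rw [hlim] at this
  exact absurd this (by simpa using hUpos.ne')
end
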